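/- arXiv:1412.6455 — 6 statements merged into one kernel-verified Lean document; each statement's English description precedes it below -/
import Mathlib

section
/- Let n ≥ 2 and let u₁, u₂ : {0,...,n−1} → [0,1] satisfy the self-anonymity relation u₁(x) = u₂(x+1) for all x ∈ {0,...,n−2}. Let X be a binomial random variable Binomial(n−1, 1/2). Then |E[u₁(X)] − E[u₂(X)]| ≤ (e/π)·(1/√(n−1)). -/
/-!
Write `m = n - 1` and `c x = C(m, x)`. Clearing the common denominator `2 ^ m` and using
`u₁ x = u₂ (x + 1)`, the difference of the two numerators becomes, after an Abel summation,
`∑ₓ u₁ x (c x - c (x + 1)) - u₂ 0`. Since `c` increases up to `m / 2` and decreases after it,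
and the `u`'s take values in `[0, 1]`, the Abel sum lies in `[1 - c (m / 2), c (m / 2)]`, so the
numerator is at most the central coefficient `c (m / 2)` in absolute value. Finally
`3 m C(m, m / 2) ^ 2 ≤ 2 · 4 ^ m`, proved by induction on the central binomial coefficients,
gives `C(m, m / 2) / 2 ^ m ≤ √(2 / 3) / √m`, and `√(2 / 3) < 0.82 < e / π`.
-/

open Finset

namespace Nat

theorem choose_succ_le_choose_of_le_two_mul_add_one {n r : ℕ} (h : n ≤ 2 * r + 1) :
    n.choose (r + 1) ≤ n.choose r := by
  refine Nat.le_of_mul_le_mul_right ?_ (succ_pos r)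
  rw [choose_succ_right_eq]
  exact Nat.mul_le_mul_left _ (by omega)

theorem centralBinom_succ_eq_two_mul_choose (k : ℕ) :
    (k + 1).centralBinom = 2 * (2 * k + 1).choose k := by
  rw [centralBinom_eq_two_mul_choose, show 2 * (k + 1) = 2 * k + 1 + 1 by ring,
    choose_succ_succ, choose_symm_half]
  ring

theorem three_mul_add_one_mul_centralBinom_sq_le (k : ℕ) :
    (3 * k + 1) * k.centralBinom ^ 2 ≤ 16 ^ k := by
  induction k with
  | zero => simp
  | succ k ih =>
    have hpoly : (3 * k + 4) * (2 * k + 1) ^ 2 ≤ 4 * (k + 1) ^ 2 * (3 * k + 1) := by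
      ring_nf; omega
    refine Nat.le_of_mul_le_mul_left ?_ (by positivity : 0 < (k + 1) ^ 2 * (3 * k + 1))
    calc (k + 1) ^ 2 * (3 * k + 1) * ((3 * (k + 1) + 1) * (k + 1).centralBinom ^ 2)
        = (3 * k + 4) * (3 * k + 1) * ((k + 1) * (k + 1).centralBinom) ^ 2 := by ring
      _ = 4 * ((3 * k + 4) * (2 * k + 1) ^ 2) * ((3 * k + 1) * k.centralBinom ^ 2) := by
        rw [succ_mul_centralBinom_succ]; ring
      _ ≤ 4 * (4 * (k + 1) ^ 2 * (3 * k + 1)) * 16 ^ k := by gcongr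
      _ = (k + 1) ^ 2 * (3 * k + 1) * 16 ^ (k + 1) := by ring

theorem three_mul_mul_choose_half_sq_le (m : ℕ) :
    3 * m * m.choose (m / 2) ^ 2 ≤ 2 * 4 ^ m := by
  obtain ⟨k, rfl | rfl⟩ := even_or_odd' m
  · have hcb := three_mul_add_one_mul_centralBinom_sq_le k
    rw [Nat.mul_div_cancel_left k two_pos, ← centralBinom_eq_two_mul_choose,
      show 4 ^ (2 * k) = 16 ^ k by rw [pow_mul]; norm_num]
    nlinarith
  · have hcb := three_mul_add_one_mul_centralBinom_sq_le (k + 1)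
    rw [centralBinom_succ_eq_two_mul_choose, pow_succ 16] at hcb
    rw [show (2 * k + 1) / 2 = k by omega, show 4 ^ (2 * k + 1) = 4 * 16 ^ k by
      rw [pow_succ, pow_mul]; norm_num; ring]
    nlinarith

end Nat

section

variable {f u : ℕ → ℝ} {a b : ℕ}

theorem sum_mul_sub_succ_mem_Icc_of_antitone (hab : a ≤ b)
    (hf : ∀ x ∈ Ico a b, f (x + 1) ≤ f x) (hu : ∀ x ∈ Ico a b, u x ∈ Set.Icc 0 1) :
    ∑ x ∈ Ico a b, u x * (f x - f (x + 1)) ∈ Set.Icc 0 (f a - f b) := by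
  have htele : ∑ x ∈ Ico a b, (f x - f (x + 1)) = f a - f b := by
    have := sum_Ico_sub f hab
    rw [sum_sub_distrib] at this ⊢
    linarith
  refine ⟨sum_nonneg fun x hx => ?_, htele ▸ sum_le_sum fun x hx => ?_⟩
  · exact mul_nonneg (hu x hx).1 (sub_nonneg.2 (hf x hx))
  · exact mul_le_of_le_one_left (sub_nonneg.2 (hf x hx)) (hu x hx).2

theorem sum_mul_sub_succ_mem_Icc_of_monotone (hab : a ≤ b)
    (hf : ∀ x ∈ Ico a b, f x ≤ f (x + 1)) (hu : ∀ x ∈ Ico a b, u x ∈ Set.Icc 0 1) :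
    ∑ x ∈ Ico a b, u x * (f x - f (x + 1)) ∈ Set.Icc (f a - f b) 0 := by
  have h := sum_mul_sub_succ_mem_Icc_of_antitone (f := -f) hab
    (fun x hx => neg_le_neg (hf x hx)) hu
  have hneg : ∑ x ∈ Ico a b, u x * (f x - f (x + 1)) =
      -∑ x ∈ Ico a b, u x * ((-f) x - (-f) (x + 1)) := by
    rw [← sum_neg_distrib]
    exact sum_congr rfl fun x _ => by simp only [Pi.neg_apply]; ring
  simp only [hneg, Set.mem_Icc, Pi.neg_apply] at h ⊢
  constructor <;> linarith

end

theorem sum_mul_sub_sum_mul_of_shift {m : ℕ} {u₁ u₂ c : ℕ → ℝ} (hc : c (m + 1) = 0)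
    (hshift : ∀ x < m, u₁ x = u₂ (x + 1)) :
    ∑ x ∈ range (m + 1), u₁ x * c x - ∑ x ∈ range (m + 1), u₂ x * c x =
      ∑ x ∈ range (m + 1), u₁ x * (c x - c (x + 1)) - u₂ 0 * c 0 := by
  have hu₂ : ∑ x ∈ range (m + 1), u₂ x * c x = ∑ x ∈ range m, u₁ x * c (x + 1) + u₂ 0 * c 0 := by
    rw [sum_range_succ']
    congr 1
    exact sum_congr rfl fun x hx => by rw [hshift x (mem_range.1 hx)]
  rw [hu₂, sum_range_succ (fun x => u₁ x * (c x - c (x + 1))), hc,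
    sum_range_succ (fun x => u₁ x * c x)]
  simp only [mul_sub, sum_sub_distrib]
  ring

theorem sum_mul_choose_sub_choose_succ_mem_Icc (m : ℕ) {u : ℕ → ℝ}
    (hu : ∀ x ≤ m, u x ∈ Set.Icc 0 1) :
    ∑ x ∈ range (m + 1), u x * ((m.choose x : ℝ) - m.choose (x + 1)) ∈
      Set.Icc (1 - (m.choose (m / 2) : ℝ)) (m.choose (m / 2)) := by
  have hhalf : m / 2 ≤ m + 1 := by omega
  obtain ⟨hinc, hinc₀⟩ := sum_mul_sub_succ_mem_Icc_of_monotone (f := fun x => (m.choose x : ℝ))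
    (u := u) (Nat.zero_le (m / 2))
    (fun x hx => Nat.cast_le.2 (Nat.choose_le_succ_of_lt_half_left (mem_Ico.1 hx).2))
    (fun x hx => hu x (by grind))
  obtain ⟨hdec₀, hdec⟩ := sum_mul_sub_succ_mem_Icc_of_antitone (f := fun x => (m.choose x : ℝ))
    (u := u) hhalf
    (fun x hx => Nat.cast_le.2 (Nat.choose_succ_le_choose_of_le_two_mul_add_one (by grind)))
    (fun x hx => hu x (by grind))
  rw [range_eq_Ico, ← sum_Ico_consecutive _ (Nat.zero_le _) hhalf]
  simp only [Nat.choose_zero_right, Nat.cast_one, Nat.choose_succ_self, Nat.cast_zero,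
    sub_zero] at hinc hdec
  constructor <;> linarith

theorem abs_sum_mul_choose_sub_sum_mul_choose_le {m : ℕ} {u₁ u₂ : ℕ → ℝ}
    (h₁ : ∀ x ≤ m, u₁ x ∈ Set.Icc 0 1) (h₂ : u₂ 0 ∈ Set.Icc 0 1)
    (hshift : ∀ x < m, u₁ x = u₂ (x + 1)) :
    |∑ x ∈ range (m + 1), u₁ x * m.choose x - ∑ x ∈ range (m + 1), u₂ x * m.choose x| ≤
      m.choose (m / 2) := by
  rw [sum_mul_sub_sum_mul_of_shift (by simp) hshift, abs_le]
  have := sum_mul_choose_sub_choose_succ_mem_Icc m h₁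
  simp only [Nat.choose_zero_right, Nat.cast_one, mul_one, Set.mem_Icc] at this h₂ ⊢
  constructor <;> linarith

theorem choose_half_div_two_pow_le (m : ℕ) (hm : 0 < m) :
    (m.choose (m / 2) : ℝ) / 2 ^ m ≤ √(2 / 3) / √m := by
  rw [← Real.sqrt_div' _ (Nat.cast_nonneg m), Real.le_sqrt (by positivity) (by positivity),
    div_pow, div_div, div_le_div_iff₀ (by positivity) (by positivity)]
  have key : (3 * m * m.choose (m / 2) ^ 2 : ℝ) ≤ 2 * 4 ^ m := by
    exact_mod_cast Nat.three_mul_mul_choose_half_sq_le m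
  rw [← pow_mul, mul_comm m 2, pow_mul]
  norm_num
  linarith

theorem sqrt_two_div_three_le_exp_one_div_pi : √(2 / 3) ≤ Real.exp 1 / Real.pi := by
  have hpi := Real.pi_lt_d2
  have he := Real.exp_one_gt_d9
  rw [Real.sqrt_le_left (by positivity), div_pow, le_div_iff₀ (by positivity)]
  nlinarith [Real.pi_pos]

theorem stmt2 (n : ℕ) (hn : 2 ≤ n) (u₁ u₂ : ℕ → ℝ)
    (h₁ : ∀ x < n, 0 ≤ u₁ x ∧ u₁ x ≤ 1)
    (h₂ : ∀ x < n, 0 ≤ u₂ x ∧ u₂ x ≤ 1)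
    (hself : ∀ x, x < n - 1 → u₁ x = u₂ (x + 1)) :
    |(∑ x ∈ Finset.range n, u₁ x * ((n - 1).choose x : ℝ) / 2 ^ (n - 1)) -
      (∑ x ∈ Finset.range n, u₂ x * ((n - 1).choose x : ℝ) / 2 ^ (n - 1))| ≤
      (Real.exp 1 / Real.pi) * (1 / Real.sqrt (n - 1)) := by
  obtain ⟨m, rfl⟩ : ∃ m, n = m + 1 := ⟨n - 1, by omega⟩
  simp only [Nat.add_sub_cancel, Nat.cast_add, Nat.cast_one, add_sub_cancel_right] at *
  rw [← sum_div, ← sum_div, ← sub_div, abs_div, abs_of_pos (by positivity : (0 : ℝ) < 2 ^ m),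
    ← div_eq_mul_one_div]
  calc _ ≤ (m.choose (m / 2) : ℝ) / 2 ^ m := by
        gcongr
        exact abs_sum_mul_choose_sub_sum_mul_choose_le (fun x hx => h₁ x (by omega))
          (h₂ 0 (by omega)) hself
    _ ≤ √(2 / 3) / √m := choose_half_div_two_pow_le m (by omega)
    _ ≤ Real.exp 1 / Real.pi / √m := by gcongr; exact sqrt_two_div_three_le_exp_one_div_pi
end

section
/- Let Y be a binomial random variable B(n, p) with ζ ≤ p ≤ 1 − ζ for some 0 < ζ < 1/2. Then for x = ⌊np⌋, the ratio Pr[Y = x+1] / Pr[Y = x] < 1 + 1/(ζn). -/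
noncomputable def binomProb (n : ℕ) (p : ℝ) (k : ℕ) : ℝ :=
  (n.choose k : ℝ) * p ^ k * (1 - p) ^ (n - k)

theorem stmt4 (n : ℕ) (hn : 1 ≤ n) (ζ p : ℝ) (hζ0 : 0 < ζ) (hζ : ζ < 1 / 2)
    (hpl : ζ ≤ p) (hpu : p ≤ 1 - ζ)
    (hx : ⌊(n : ℝ) * p⌋₊ < n) :
    binomProb n p (⌊(n : ℝ) * p⌋₊ + 1) / binomProb n p ⌊(n : ℝ) * p⌋₊ <
      1 + 1 / (ζ * n) := by
  have hp0 : 0 < p := lt_of_lt_of_le hζ0 hpl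
  have hp1 : p < 1 := by linarith
  have h1p : 0 < 1 - p := by linarith
  have hn0 : 0 < (n : ℝ) := by exact_mod_cast hn
  set x := ⌊(n : ℝ) * p⌋₊ with hxdef
  have hxle : (x : ℝ) ≤ (n : ℝ) * p := Nat.floor_le (by positivity)
  have hxgt : (n : ℝ) * p < (x : ℝ) + 1 := Nat.lt_floor_add_one _
  have hxlen : x ≤ n := le_of_lt hx
  have hxn : (x : ℝ) < (n : ℝ) := by exact_mod_cast hx
  have hb : (0 : ℝ) < ((x : ℝ) + 1) * (1 - p) := by positivity
  have hBpos : 0 < binomProb n p x := by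
    unfold binomProb
    have hc : 0 < (n.choose x : ℝ) := by exact_mod_cast Nat.choose_pos hxlen
    positivity
  have hch : (n.choose (x + 1) : ℝ) * ((x : ℝ) + 1) = (n.choose x : ℝ) * ((n : ℝ) - x) := by
    have h := Nat.choose_succ_right_eq n x
    have h2 : ((n.choose (x + 1) * (x + 1) : ℕ) : ℝ) = ((n.choose x * (n - x) : ℕ) : ℝ) := by
      exact_mod_cast h
    push_cast [Nat.cast_sub hxlen] at h2
    linarith
  have hexp : n - x = (n - (x + 1)) + 1 := by omega
  have key : binomProb n p (x + 1) * (((x : ℝ) + 1) * (1 - p))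
      = binomProb n p x * (((n : ℝ) - x) * p) := by
    unfold binomProb
    rw [hexp, pow_succ, pow_succ]
    linear_combination (p ^ x * p * (1 - p) ^ (n - (x + 1)) * (1 - p)) * hch
  have hratio : binomProb n p (x + 1) / binomProb n p x
      = ((n : ℝ) - x) * p / (((x : ℝ) + 1) * (1 - p)) := by
    rw [div_eq_div_iff hBpos.ne' hb.ne']
    linarith [key]
  rw [hratio, div_lt_iff₀ hb]
  set t : ℝ := 1 / ((n : ℝ) * (1 - p)) with ht
  have ht0 : 0 < t := by positivity
  have htmul : t * ((n : ℝ) * (1 - p)) = 1 := by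
    rw [ht, one_div, inv_mul_cancel₀ (by positivity)]
  have hζn : 0 < ζ * n := by positivity
  have h1 : t ≤ 1 / (ζ * n) := by
    apply one_div_le_one_div_of_le hζn
    nlinarith
  have hs : 0 < (x : ℝ) + 1 - (n : ℝ) * p := by linarith
  have step : ((n : ℝ) - x) * p < (1 + t) * (((x : ℝ) + 1) * (1 - p)) := by
    nlinarith [mul_pos hs h1p, mul_pos hs hp0, mul_pos (mul_pos hs ht0) h1p, htmul]
  have hmono : (1 + t) * (((x : ℝ) + 1) * (1 - p))
      ≤ (1 + 1 / (ζ * n)) * (((x : ℝ) + 1) * (1 - p)) := by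
    apply mul_le_mul_of_nonneg_right _ hb.le
    linarith
  linarith
end

section
/- Let Y be a binomial random variable B(n, p) with ζ ≤ p ≤ 1 − ζ for 0 < ζ < 1/2 and n ≥ 1. Then Pr[Y = ⌊np⌋] ≤ (e/(2π))·(1/(ζ√n)). -/
open Real
open scoped Nat

lemma factorial_le_stirling {n : ℕ} (hn : n ≠ 0) :
    (n ! : ℝ) ≤ exp 1 * √n * (n / exp 1) ^ n := by
  obtain ⟨m, rfl⟩ := Nat.exists_eq_succ_of_ne_zero hn
  have h : Stirling.stirlingSeq (m + 1) ≤ exp 1 / √2 := by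
    simpa using Stirling.stirlingSeq'_antitone (Nat.zero_le m)
  rw [Stirling.stirlingSeq, div_le_iff₀ (by positivity)] at h
  calc _ ≤ exp 1 / √2 * (√(2 * ↑(m + 1)) * (↑(m + 1) / exp 1) ^ (m + 1)) := h
    _ = _ := by rw [sqrt_mul zero_le_two]; field_simp

lemma choose_le_stirling {k b : ℕ} (hk : k ≠ 0) (hb : b ≠ 0) :
    ((k + b).choose k : ℝ) ≤
      exp 1 / (2 * π) * (√(k + b) / √(k * b)) * ((k + b) ^ (k + b) / (k ^ k * b ^ b)) := by
  have hkpos : (0 : ℝ) < k := by positivity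
  rw [Nat.cast_choose ℝ (Nat.le_add_right k b), Nat.add_sub_cancel_left]
  calc _ ≤ exp 1 * √(k + b : ℕ) * ((k + b : ℕ) / exp 1) ^ (k + b) /
        (√(2 * π * k) * (k / exp 1) ^ k * (√(2 * π * b) * (b / exp 1) ^ b)) :=
        div_le_div₀ (by positivity) (factorial_le_stirling (by omega)) (by positivity)
          (mul_le_mul (Stirling.le_factorial_stirling k) (Stirling.le_factorial_stirling b)
            (by positivity) (by positivity))
    _ = _ := by
      have h2π : √(2 * π) ^ 2 = 2 * π := sq_sqrt (by positivity)
      rw [sqrt_mul (by positivity) k, sqrt_mul (by positivity) b, sqrt_mul hkpos.le]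
      push_cast
      simp only [div_pow]
      field_simp
      rw [h2π]
      ring

/-- `p^k (1-p)^b / (x^k (1-x)^b)` for the empirical frequency `x = k / (k + b)`,
that is `exp (-(k + b) · KL(x ‖ p))`. -/
noncomputable def likelihoodRatio (k b : ℕ) (p : ℝ) : ℝ :=
  ((k + b) * p / k) ^ k * ((k + b) * (1 - p) / b) ^ b

lemma likelihoodRatio_nonneg {k b : ℕ} {p : ℝ} (hp0 : 0 ≤ p) (hp1 : p ≤ 1) :
    0 ≤ likelihoodRatio k b p := by
  unfold likelihoodRatio
  positivity

lemma binomProb_le_likelihoodRatio {k b : ℕ} (hk : k ≠ 0) (hb : b ≠ 0) {p : ℝ}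
    (hp0 : 0 ≤ p) (hp1 : p ≤ 1) :
    binomProb (k + b) p k ≤ exp 1 / (2 * π) * (√(k + b) / √(k * b)) * likelihoodRatio k b p := by
  rw [binomProb, Nat.add_sub_cancel_left, mul_assoc]
  calc _ ≤ exp 1 / (2 * π) * (√(k + b) / √(k * b)) * ((k + b) ^ (k + b) / (k ^ k * b ^ b)) *
        (p ^ k * (1 - p) ^ b) :=
        mul_le_mul_of_nonneg_right (choose_le_stirling hk hb)
          (mul_nonneg (pow_nonneg hp0 k) (pow_nonneg (sub_nonneg.2 hp1) b))
    _ = _ := by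
      rw [likelihoodRatio, div_pow, div_pow, mul_pow, mul_pow, pow_add]
      field_simp

lemma pow_mul_pow_le_one {u v : ℝ} (hu : 0 ≤ u) (hv : 0 ≤ v) {k b : ℕ}
    (h : k * u + b * v ≤ k + b) : u ^ k * v ^ b ≤ 1 :=
  calc u ^ k * v ^ b ≤ exp (u - 1) ^ k * exp (v - 1) ^ b := by
        gcongr <;> linarith [add_one_le_exp (u - 1), add_one_le_exp (v - 1)]
    _ = exp (k * (u - 1) + b * (v - 1)) := by rw [exp_add, exp_nat_mul, exp_nat_mul]
    _ ≤ exp 0 := exp_le_exp.2 (by linarith)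
    _ = 1 := exp_zero

lemma likelihoodRatio_le_one (k b : ℕ) {p : ℝ} (hp0 : 0 ≤ p) (hp1 : p ≤ 1) :
    likelihoodRatio k b p ≤ 1 := by
  have hcancel (m : ℕ) {a : ℝ} (ha : 0 ≤ a) : (m : ℝ) * (a / m) ≤ a := by
    rcases eq_or_ne m 0 with rfl | hm
    · simpa using ha
    · rw [mul_div_cancel₀ _ (Nat.cast_ne_zero.2 hm)]
  refine pow_mul_pow_le_one (by positivity) (by positivity) ?_
  linarith [hcancel k (by positivity : (0:ℝ) ≤ (k + b) * p),
    hcancel b (by positivity : (0:ℝ) ≤ (k + b) * (1 - p))]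

lemma likelihoodRatio_le_of_le {k b : ℕ} {z p : ℝ} (hz0 : 0 < z) (hz1 : z < 1)
    (hkz : k ≤ (k + b) * z) (hzp : z ≤ p) (hp1 : p ≤ 1) :
    likelihoodRatio k b p ≤ likelihoodRatio k b z := by
  have hfactor : likelihoodRatio k b p =
      likelihoodRatio k b z * ((p / z) ^ k * ((1 - p) / (1 - z)) ^ b) := by
    rw [likelihoodRatio, likelihoodRatio, mul_mul_mul_comm, ← mul_pow, ← mul_pow]
    field_simp [hz0.ne', (sub_pos.2 hz1).ne']
  have hq : 0 < 1 - z := by linarith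
  have hweighted : (k + b : ℝ) - (k * (p / z) + b * ((1 - p) / (1 - z))) =
      (p - z) * ((k + b) * z - k) / (z * (1 - z)) := by
    field_simp
    ring
  rw [hfactor]
  refine mul_le_of_le_one_right (likelihoodRatio_nonneg hz0.le hz1.le)
    (pow_mul_pow_le_one (div_nonneg (hz0.le.trans hzp) hz0.le) (div_nonneg (by linarith) hq.le) ?_)
  rw [← sub_nonneg, hweighted]
  exact div_nonneg (mul_nonneg (by linarith) (by linarith)) (by positivity)

lemma two_mul_sq_le_binaryKL {x z : ℝ} (hx : 0 < x) (hxz : x ≤ z) (hz : z < 1) :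
    2 * (z - x) ^ 2 ≤ x * log (x / z) + (1 - x) * log ((1 - x) / (1 - z)) := by
  set g : ℝ → ℝ := fun t => x * log t + (1 - x) * log (1 - t) + 2 * (t - x) ^ 2
  have hg : ∀ t ∈ Set.Ioo 0 1,
      HasDerivAt g ((t - x) * (4 - 1 / (t * (1 - t)))) t := by
    rintro t ⟨ht0, ht1⟩
    have h1 : HasDerivAt (fun t => x * log t) (x * t⁻¹) t :=
      (hasDerivAt_log ht0.ne').const_mul x
    have h2 : HasDerivAt (fun t => (1 - x) * log (1 - t)) ((1 - x) * (-1 / (1 - t))) t :=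
      (((hasDerivAt_id' t).const_sub 1).log (by linarith)).const_mul (1 - x)
    have h3 : HasDerivAt (fun t => 2 * (t - x) ^ 2) (2 * (2 * (t - x) ^ 1 * 1)) t :=
      (((hasDerivAt_id' t).sub_const x).pow 2).const_mul 2
    refine ((h1.add h2).add h3).congr_deriv ?_
    field_simp [ht0.ne', (sub_pos.2 ht1).ne']
    ring
  have hsub : Set.Icc x z ⊆ Set.Ioo 0 1 := fun t ht => ⟨hx.trans_le ht.1, ht.2.trans_lt hz⟩
  have hanti : AntitoneOn g (Set.Icc x z) := by
    refine antitoneOn_of_hasDerivWithinAt_nonpos (convex_Icc x z)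
      (fun t ht => (hg t (hsub ht)).continuousAt.continuousWithinAt)
      (fun t ht => (hg t (hsub (interior_subset ht))).hasDerivWithinAt) fun t ht => ?_
    rw [interior_Icc] at ht
    have ht0 : 0 < t := hx.trans ht.1
    have ht1 : 0 < 1 - t := by linarith [ht.2]
    have : 4 ≤ 1 / (t * (1 - t)) := by
      rw [le_div_iff₀ (by positivity)]; nlinarith [sq_nonneg (2 * t - 1)]
    exact mul_nonpos_of_nonneg_of_nonpos (by linarith [ht.1]) (by linarith)
  have hgzx := hanti ⟨le_rfl, hxz⟩ ⟨hxz, le_rfl⟩ hxz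
  simp only [g, sub_self] at hgzx
  rw [log_div hx.ne' (by linarith), log_div (by linarith) (by linarith)]
  nlinarith

lemma likelihoodRatio_le_exp {k b : ℕ} (hk : k ≠ 0) (hb : b ≠ 0) {z : ℝ}
    (hkz : k ≤ (k + b) * z) (hz : z < 1) :
    likelihoodRatio k b z ≤ exp (-(2 * (k + b) * (z - k / (k + b)) ^ 2)) := by
  set n : ℝ := k + b with hn
  set x : ℝ := k / n with hx
  have hn0 : 0 < n := by positivity
  have hx0 : 0 < x := by positivity
  have hxz : x ≤ z := by rwa [hx, div_le_iff₀ hn0, mul_comm]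
  have hk' : (k : ℝ) = n * x := by rw [hx, mul_div_cancel₀ _ hn0.ne']
  have hb' : (b : ℝ) = n * (1 - x) := by rw [mul_one_sub, ← hk', hn]; ring
  have hx1 : 0 < 1 - x := by linarith
  have hz0 : 0 < z := hx0.trans_le hxz
  have hratio : likelihoodRatio k b z = (z / x) ^ k * ((1 - z) / (1 - x)) ^ b := by
    rw [likelihoodRatio, ← hn]
    congr 2
    · rw [hk', mul_div_mul_left _ _ hn0.ne']
    · rw [hb', mul_div_mul_left _ _ hn0.ne']
  have hlog : (z / x) ^ k * ((1 - z) / (1 - x)) ^ b =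
      exp (-(n * (x * log (x / z) + (1 - x) * log ((1 - x) / (1 - z))))) := by
    have hswap (u v : ℝ) : log (u / v) = -log (v / u) := by rw [← log_inv, inv_div]
    have hexp : -(n * (x * log (x / z) + (1 - x) * log ((1 - x) / (1 - z)))) =
        k * log (z / x) + b * log ((1 - z) / (1 - x)) := by
      rw [hswap x, hswap (1 - x), hk', hb']
      ring
    rw [hexp, exp_add, exp_nat_mul, exp_nat_mul, exp_log (by positivity), exp_log (by positivity)]
  rw [hratio, hlog, exp_le_exp, neg_le_neg_iff]
  nlinarith [two_mul_sq_le_binaryKL hx0 hxz hz]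

lemma sq_le_mul_one_sub_mul_one_add {N x z : ℝ} (hx : 0 ≤ x) (hNx : 1 ≤ N * x) (hxz : x ≤ z)
    (hz : z ≤ 1 / 2) : z ^ 2 ≤ x * (1 - x) * (1 + 4 * N * (z - x) ^ 2) := by
  nlinarith [mul_nonneg hx (by linarith : 0 ≤ 1 - 2 * z),
    mul_nonneg (sq_nonneg (z - x))
      (mul_nonneg (by linarith : 0 ≤ N * x - 1) (by linarith : 0 ≤ 1 - x))]

lemma mul_likelihoodRatio_le_sqrt {k b : ℕ} (hk : k ≠ 0) (hb : b ≠ 0) {ζ p : ℝ} (hζ : 0 < ζ)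
    (hpl : ζ ≤ p) (hpu : p ≤ 1 - ζ) (hkp : k ≤ (k + b) * p) :
    ζ * (k + b) * likelihoodRatio k b p ≤ √(k * b) := by
  have hn : (0 : ℝ) < k + b := by positivity
  have hp0 : 0 ≤ p := hζ.le.trans hpl
  have hp1 : p ≤ 1 := by linarith
  have hLR0 : 0 ≤ likelihoodRatio k b p := likelihoodRatio_nonneg hp0 hp1
  rw [le_sqrt (by positivity) (by positivity)]
  rcases le_or_gt (ζ * (k + b)) k with hζk | hkζ
  · have hζb : ζ * (k + b) ≤ b := by nlinarith
    calc (ζ * (k + b) * likelihoodRatio k b p) ^ 2 ≤ (ζ * (k + b)) ^ 2 := by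
          rw [mul_pow]
          exact mul_le_of_le_one_right (sq_nonneg _)
            (pow_le_one₀ hLR0 (likelihoodRatio_le_one k b hp0 hp1))
      _ ≤ (k : ℝ) * b := by rw [sq]; exact mul_le_mul hζk hζb (by positivity) (by positivity)
  · set t : ℝ := 4 * (k + b) * (ζ - k / (k + b)) ^ 2 with ht
    have hLR : likelihoodRatio k b p ≤ exp (-(t / 2)) := by
      refine (likelihoodRatio_le_of_le hζ (by linarith) (by linarith) hpl hp1).trans
        ((likelihoodRatio_le_exp hk hb (by linarith) (by linarith)).trans_eq ?_)
      rw [ht]; ring_nf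
    have hquad : (ζ * (k + b)) ^ 2 ≤ k * b * (1 + t) := by
      have hkx : (k : ℝ) / (k + b) ≤ ζ := by rw [div_le_iff₀ hn]; linarith
      have h := sq_le_mul_one_sub_mul_one_add (N := k + b) (by positivity)
        (by rw [mul_div_cancel₀ _ hn.ne']; exact_mod_cast Nat.one_le_iff_ne_zero.2 hk) hkx
        (by linarith)
      have hkb : (k : ℝ) * b = (k + b) ^ 2 * ((k / (k + b)) * (1 - k / (k + b))) := by
        field_simp; ring
      rw [hkb, ht, mul_pow, mul_assoc]
      nlinarith [sq_nonneg ((k : ℝ) + b)]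
    calc (ζ * (k + b) * likelihoodRatio k b p) ^ 2 ≤ (ζ * (k + b)) ^ 2 * exp (-(t / 2)) ^ 2 := by
          rw [mul_pow]; gcongr
      _ = (ζ * (k + b)) ^ 2 * exp (-t) := by rw [← exp_nat_mul]; ring_nf
      _ ≤ (k : ℝ) * b * exp t * exp (-t) := by
          gcongr
          exact hquad.trans (by gcongr; linarith [add_one_le_exp t])
      _ = k * b := by rw [mul_assoc, ← exp_add, add_neg_cancel, exp_zero, mul_one]

lemma exp_neg_one_le_exp_one_div_two_pi : exp (-1) ≤ exp 1 / (2 * π) := by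
  rw [le_div_iff₀ (by positivity), exp_neg, inv_mul_le_iff₀ (exp_pos 1)]
  nlinarith [exp_one_gt_d9, pi_lt_d2]

lemma binomProb_zero_mul_sqrt_le (n : ℕ) {ζ p : ℝ} (hζ : 0 < ζ) (hpl : ζ ≤ p) (hp1 : p ≤ 1) :
    binomProb n p 0 * (ζ * √n) ≤ exp 1 / (2 * π) := by
  have hsqrt : √(n : ℝ) ≤ n := by
    rcases n.eq_zero_or_pos with rfl | hn
    · simp
    · exact sqrt_le_self_iff.2 (Or.inr (Nat.one_le_cast.2 hn))
  calc binomProb n p 0 * (ζ * √n) = (1 - p) ^ n * (ζ * √n) := by simp [binomProb]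
    _ ≤ exp (-ζ) ^ n * (ζ * n) := by
        gcongr
        linarith [add_one_le_exp (-ζ)]
    _ = ζ * n * exp (-(ζ * n)) := by rw [← exp_nat_mul]; ring_nf
    _ ≤ exp (-1) := mul_exp_neg_le_exp_neg_one _
    _ ≤ exp 1 / (2 * π) := exp_neg_one_le_exp_one_div_two_pi

lemma binomProb_mul_sqrt_le {n k : ℕ} (hk : k ≠ 0) (hkn : k < n) {ζ p : ℝ} (hζ : 0 < ζ)
    (hpl : ζ ≤ p) (hpu : p ≤ 1 - ζ) (hkp : k ≤ n * p) :
    binomProb n p k * (ζ * √n) ≤ exp 1 / (2 * π) := by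
  obtain ⟨b, rfl⟩ : ∃ b, n = k + b := ⟨n - k, by omega⟩
  have hb : b ≠ 0 := by omega
  push_cast at hkp ⊢
  have hkb : 0 < √((k : ℝ) * b) := by positivity
  calc binomProb (k + b) p k * (ζ * √(k + b))
      ≤ exp 1 / (2 * π) * (√(k + b) / √(k * b)) * likelihoodRatio k b p * (ζ * √(k + b)) := by
        gcongr
        exact binomProb_le_likelihoodRatio hk hb (hζ.le.trans hpl) (by linarith)
    _ = exp 1 / (2 * π) * (ζ * (k + b) * likelihoodRatio k b p / √(k * b)) := by
        field_simp
        rw [sq_sqrt (by positivity)]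
    _ ≤ exp 1 / (2 * π) * 1 := by
        gcongr
        rw [div_le_one hkb]
        exact mul_likelihoodRatio_le_sqrt hk hb hζ hpl hpu hkp
    _ = exp 1 / (2 * π) := mul_one _

theorem stmt5_general (n : ℕ) (hn : 1 ≤ n) (ζ p : ℝ) (hζ0 : 0 < ζ)
    (hpl : ζ ≤ p) (hpu : p ≤ 1 - ζ) :
    binomProb n p ⌊(n : ℝ) * p⌋₊ ≤
      (Real.exp 1 / (2 * Real.pi)) * (1 / (ζ * Real.sqrt n)) := by
  have hn' : (1 : ℝ) ≤ n := Nat.one_le_cast.2 hn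
  rw [mul_one_div, le_div_iff₀ (by positivity)]
  set k := ⌊(n : ℝ) * p⌋₊
  have hkp : (k : ℝ) ≤ n * p := Nat.floor_le (by nlinarith)
  rcases Nat.eq_zero_or_pos k with hk | hk
  · rw [hk]
    exact binomProb_zero_mul_sqrt_le n hζ0 hpl (by linarith)
  · have hkn : k < n := by exact_mod_cast (show (k : ℝ) < n by nlinarith)
    exact binomProb_mul_sqrt_le hk.ne' hkn hζ0 hpl hpu hkp

theorem stmt5 (n : ℕ) (hn : 1 ≤ n) (ζ p : ℝ) (hζ0 : 0 < ζ) (hζ : ζ < 1 / 2)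
    (hpl : ζ ≤ p) (hpu : p ≤ 1 - ζ) :
    binomProb n p ⌊(n : ℝ) * p⌋₊ ≤
      (Real.exp 1 / (2 * Real.pi)) * (1 / (ζ * Real.sqrt n)) :=
  stmt5_general n hn ζ p hζ0 hpl hpu
end

section
/- Let X^{(j,n)} denote the sum of n independent Bernoulli variables where the first j have success probability 1−ζ and the remaining n−j have success probability ζ, with 0 < ζ ≤ 1/2. Then for all j ∈ {1,...,n}, the total variation distance between X^{(j−1,n)} and X^{(j,n)} satisfies ‖X^{(j−1,n)} − X^{(j,n)}‖_TV ≤ (1 − 2ζ)·max_i Pr[X^{(j−1,n−1)} = i], which is O(1/(ζ√n)). -/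
/-- Probability that the sum of `n` independent Bernoulli variables with success
probabilities `p 0, …, p (n-1)` equals `i` (Poisson binomial distribution). -/
noncomputable def pbProb (n : ℕ) (p : ℕ → ℝ) (i : ℕ) : ℝ :=
  ∑ S ∈ (Finset.range n).powersetCard i,
    (∏ j ∈ S, p j) * ∏ j ∈ (Finset.range n) \ S, (1 - p j)

/-- Success probabilities for `X^{(j,n)}`: the first `j` variables have
expectation `1 - ζ`, the rest have expectation `ζ`. -/
noncomputable def probs (ζ : ℝ) (j : ℕ) : ℕ → ℝ := fun l => if l < j then 1 - ζ else ζ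

open Polynomial Finset

noncomputable def fac (p : ℝ) : ℝ[X] := C p * X + C (1 - p)

lemma pbProb_eq_coeff (n : ℕ) (p : ℕ → ℝ) (i : ℕ) :
    pbProb n p i = (∏ j ∈ Finset.range n, fac (p j)).coeff i := by
  unfold fac
  rw [Finset.prod_add, Polynomial.finset_sum_coeff, pbProb,
    Finset.powersetCard_eq_filter, Finset.sum_filter]
  apply Finset.sum_congr rfl
  intro S _
  have h1 : (∏ j ∈ S, (C (p j) * X)) = C (∏ j ∈ S, p j) * X ^ S.card := by
    rw [Finset.prod_mul_distrib, Finset.prod_const, map_prod]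
  have h2 : (∏ j ∈ Finset.range n \ S, (C (1 - p j) : ℝ[X]))
      = C (∏ j ∈ Finset.range n \ S, (1 - p j)) := by rw [map_prod]
  rw [h1, h2]
  rw [mul_right_comm, ← Polynomial.C_mul, Polynomial.coeff_C_mul, Polynomial.coeff_X_pow]
  by_cases h : S.card = i
  · simp [h]
  · simp [h, Ne.symm h]

def GoodSeq (m : ℕ) (a : ℕ → ℝ) : Prop :=
  (∀ i, i ≤ m → 0 < a i) ∧ (∀ i, m < i → a i = 0) ∧ (∀ i, a i * a (i + 2) ≤ a (i + 1) ^ 2)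

lemma GoodSeq.nonneg {m : ℕ} {a : ℕ → ℝ} (h : GoodSeq m a) (i : ℕ) : 0 ≤ a i := by
  rcases le_or_gt i m with hi | hi
  · exact (h.1 i hi).le
  · rw [h.2.1 i hi]

lemma GoodSeq.cross {m : ℕ} {a : ℕ → ℝ} (h : GoodSeq m a) (i : ℕ) :
    a i * a (i + 3) ≤ a (i + 1) * a (i + 2) := by
  have k1 := h.2.2 i
  have k2 := h.2.2 (i + 1)
  simp only [show i+1+2 = i+3 by omega, show i+1+1 = i+2 by omega] at k2
  rcases eq_or_lt_of_le (h.nonneg (i+1)) with h1 | h1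
  · have hm : m < i + 1 := by
      by_contra hc
      have := h.1 (i+1) (not_lt.mp hc); linarith
    rw [h.2.1 (i+3) (by omega), mul_zero]
    exact mul_nonneg (h.nonneg _) (h.nonneg _)
  rcases eq_or_lt_of_le (h.nonneg (i+2)) with h2 | h2
  · have hm : m < i + 2 := by
      by_contra hc
      have := h.1 (i+2) (not_lt.mp hc); linarith
    rw [h.2.1 (i+3) (by omega), mul_zero]
    exact mul_nonneg (h.nonneg _) (h.nonneg _)
  have hmul := mul_le_mul k1 k2 (mul_nonneg (h.nonneg (i+1)) (h.nonneg (i+3))) (sq_nonneg (a (i+1)))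
  refine le_of_mul_le_mul_right ?_ (mul_pos h1 h2)
  linear_combination hmul

lemma goodSeq_step {m : ℕ} {a : ℕ → ℝ} (h : GoodSeq m a) {p : ℝ} (hp0 : 0 < p) (hp1 : p < 1)
    {b : ℕ → ℝ} (hb0 : b 0 = (1 - p) * a 0)
    (hbs : ∀ i, b (i + 1) = p * a i + (1 - p) * a (i + 1)) :
    GoodSeq (m + 1) b := by
  have h1p : 0 < 1 - p := by linarith
  refine ⟨?_, ?_, ?_⟩
  · intro i hi
    cases i with
    | zero => rw [hb0]; exact mul_pos h1p (h.1 0 (Nat.zero_le m))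
    | succ k =>
        rw [hbs]
        have hk : k ≤ m := by omega
        have := h.1 k hk
        have := h.nonneg (k+1)
        nlinarith
  · intro i hi
    cases i with
    | zero => omega
    | succ k =>
        rw [hbs, h.2.1 k (by omega), h.2.1 (k+1) (by omega)]; ring
  · intro i
    cases i with
    | zero =>
        rw [hb0, hbs, hbs]
        simp only [show (1:ℕ)+1 = 2 by omega, show (0:ℕ)+1 = 1 by omega, show (0:ℕ)+2 = 2 by omega]
        have l1 := h.2.2 0
        simp only [show (0:ℕ)+1 = 1 by omega, show (0:ℕ)+2 = 2 by omega] at l1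
        nlinarith [mul_le_mul_of_nonneg_left l1 (sq_nonneg (1-p)),
          sq_nonneg (p * a 0),
          mul_nonneg (mul_pos hp0 h1p).le (mul_nonneg (h.nonneg 0) (h.nonneg 1))]
    | succ k =>
        rw [hbs, hbs, hbs]
        simp only [show k+1+1 = k+2 by omega, show k+1+2 = k+3 by omega,
          show k+2+1 = k+3 by omega]
        have l1 := h.2.2 k
        have l2 := h.2.2 (k+1)
        have l3 := h.cross k
        simp only [show k+1+1 = k+2 by omega, show k+1+2 = k+3 by omega] at l2
        nlinarith [mul_le_mul_of_nonneg_left l1 (sq_nonneg p),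
          mul_le_mul_of_nonneg_left l2 (sq_nonneg (1-p)),
          mul_le_mul_of_nonneg_left l3 (mul_pos hp0 h1p).le]

lemma coeff_fac_mul_zero (p : ℝ) (Q : ℝ[X]) : (fac p * Q).coeff 0 = (1 - p) * Q.coeff 0 := by
  rw [Polynomial.mul_coeff_zero]
  simp [fac]

lemma coeff_fac_mul_succ (p : ℝ) (Q : ℝ[X]) (i : ℕ) :
    (fac p * Q).coeff (i + 1) = p * Q.coeff i + (1 - p) * Q.coeff (i + 1) := by
  have : fac p * Q = C p * (X * Q) + C (1 - p) * Q := by rw [fac]; ring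
  rw [this, Polynomial.coeff_add, Polynomial.coeff_C_mul, Polynomial.coeff_C_mul,
    Polynomial.coeff_X_mul]

lemma good_prod (s : Finset ℕ) (p : ℕ → ℝ) (hp : ∀ l ∈ s, 0 < p l ∧ p l < 1) :
    GoodSeq s.card (fun i => (∏ j ∈ s, fac (p j)).coeff i) := by
  induction s using Finset.induction_on with
  | empty =>
      refine ⟨?_, ?_, ?_⟩
      · intro i hi
        have : i = 0 := Nat.le_zero.mp hi
        subst this
        simp
      · intro i hi
        simp only [Finset.card_empty, Finset.prod_empty, Polynomial.coeff_one,
          if_neg (by omega : ¬ i = 0)]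
      · intro i
        simp only [Finset.prod_empty, Polynomial.coeff_one,
          if_neg (by omega : ¬ i + 2 = 0), mul_zero]
        positivity
  | @insert k s hk ih =>
      have hpk := hp k (Finset.mem_insert_self k s)
      have hgs := ih (fun l hl => hp l (Finset.mem_insert_of_mem hl))
      rw [Finset.card_insert_of_notMem hk]
      have hprod : ∏ j ∈ insert k s, fac (p j) = fac (p k) * ∏ j ∈ s, fac (p j) :=
        Finset.prod_insert hk
      exact goodSeq_step hgs hpk.1 hpk.2
        (by rw [hprod, coeff_fac_mul_zero])
        (fun i => by rw [hprod, coeff_fac_mul_succ])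

noncomputable def aprev (a : ℕ → ℝ) : ℕ → ℝ := fun i => match i with | 0 => 0 | (k+1) => a k

lemma goodSeq_incr {m : ℕ} {a : ℕ → ℝ} (h : GoodSeq m a) :
    ∀ k, a k < a (k + 1) → ∀ i, i ≤ k → a i < a (i + 1) := by
  intro k
  induction k with
  | zero =>
      intro hlt i hi
      have : i = 0 := Nat.le_zero.mp hi
      subst this; exact hlt
  | succ k ih =>
      intro hlt i hi
      have hpos : 0 < a (k + 1) := by
        rcases eq_or_lt_of_le (h.nonneg (k+1)) with h1 | h1
        · exfalso
          have hm : m < k + 1 := by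
            by_contra hc
            have := h.1 (k+1) (not_lt.mp hc); linarith
          have := h.2.1 (k+2) (by omega)
          rw [show k+1+1 = k+2 by omega] at hlt
          linarith
        · exact h1
      have hstep : a k < a (k + 1) := by
        by_contra hc
        push_neg at hc
        have lc := h.2.2 k
        rw [show k+1+1 = k+2 by omega] at hlt
        nlinarith
      rcases Nat.lt_or_ge i (k+1) with hik | hik
      · exact ih hstep i (by omega)
      · have : i = k + 1 := by omega
        subst this; exact hlt

lemma telescope_max (a : ℕ → ℝ) (h0 : 0 ≤ a 0) :
    ∀ k, (∀ i, i < k → a i ≤ a (i + 1)) →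
      ∑ i ∈ Finset.range (k + 1), max (a i - aprev a i) 0 = a k := by
  intro k
  induction k with
  | zero =>
      intro _
      simp [aprev, max_eq_left h0]
  | succ k ih =>
      intro hmono
      rw [Finset.sum_range_succ, ih (fun i hi => hmono i (by omega))]
      have hk : a k ≤ a (k+1) := hmono k (by omega)
      rw [show aprev a (k+1) = a k from rfl, max_eq_left (by linarith)]
      ring

lemma sum_pos_part_le {m : ℕ} {a : ℕ → ℝ} (h : GoodSeq m a) :
    ∀ k, ∑ i ∈ Finset.range (k + 1), max (a i - aprev a i) 0 ≤
      (Finset.range (k + 1)).sup' (Finset.nonempty_range_iff.mpr (Nat.succ_ne_zero k)) a := by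
  intro k
  induction k with
  | zero =>
      rw [Finset.sum_range_one]
      rw [show aprev a 0 = 0 from rfl, sub_zero, max_eq_left (h.nonneg 0)]
      exact Finset.le_sup' a (Finset.self_mem_range_succ 0)
  | succ k ih =>
      rcases le_or_gt (a (k+1)) (a k) with hle | hlt
      · rw [Finset.sum_range_succ]
        rw [show aprev a (k+1) = a k from rfl, max_eq_right (by linarith), add_zero]
        refine le_trans ih ?_
        exact Finset.sup'_mono a (Finset.range_subset_range.mpr (by omega)) _
      · have hmono := goodSeq_incr h k hlt
        rw [telescope_max a (h.nonneg 0) (k+1) (fun i hi => (hmono i (by omega)).le)]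
        exact Finset.le_sup' a (Finset.self_mem_range_succ (k+1))

lemma prod_probs (ζ : ℝ) (m n : ℕ) (h : m ≤ n) :
    ∏ l ∈ Finset.range n, fac (probs ζ m l) = fac (1 - ζ) ^ m * fac ζ ^ (n - m) := by
  rw [Finset.range_eq_Ico, ← Finset.prod_Ico_consecutive _ (Nat.zero_le m) h]
  congr 1
  · rw [Finset.prod_congr rfl (g := fun _ => fac (1 - ζ)) (fun l hl => by
      simp only [probs, if_pos (Finset.mem_Ico.mp hl).2]),
      Finset.prod_const, Nat.card_Ico, Nat.sub_zero]
  · rw [Finset.prod_congr rfl (g := fun _ => fac ζ) (fun l hl => by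
      simp only [probs, if_neg (by have := (Finset.mem_Ico.mp hl).1; omega : ¬ l < m)]),
      Finset.prod_const, Nat.card_Ico]

theorem stmt9 (n j : ℕ) (hj : 1 ≤ j) (hjn : j ≤ n) (hn : 1 ≤ n)
    (ζ : ℝ) (hζ0 : 0 < ζ) (hζ : ζ ≤ 1 / 2) :
    (1 / 2) * ∑ i ∈ Finset.range (n + 1),
        |pbProb n (probs ζ (j - 1)) i - pbProb n (probs ζ j) i| ≤
      (1 - 2 * ζ) *
        (Finset.range n).sup' (Finset.nonempty_range_iff.mpr (by omega))
          (fun i => pbProb (n - 1) (probs ζ (j - 1)) i) := by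
  set D : ℝ[X] := fac (1 - ζ) ^ (j - 1) * fac ζ ^ (n - j) with hD
  set a : ℕ → ℝ := fun i => D.coeff i with ha
  -- D is the distribution of the other n-1 variables
  have hDprod : ∏ l ∈ Finset.range (n - 1), fac (probs ζ (j - 1) l) = D := by
    rw [prod_probs ζ (j - 1) (n - 1) (by omega), hD, show n - 1 - (j - 1) = n - j by omega]
  have hgood : GoodSeq (n - 1) a := by
    have := good_prod (Finset.range (n - 1)) (probs ζ (j - 1)) (fun l _ => by
      simp only [probs]
      split <;> constructor <;> linarith)
    rwa [Finset.card_range, hDprod] at this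
  -- identify pbProb (n-1) with a
  have hQ : ∀ i, pbProb (n - 1) (probs ζ (j - 1)) i = a i := fun i => by
    rw [pbProb_eq_coeff, hDprod]
  -- the two full products
  have hP1 : ∀ i, pbProb n (probs ζ (j - 1)) i = (fac ζ * D).coeff i := fun i => by
    rw [pbProb_eq_coeff, prod_probs ζ (j - 1) n (by omega),
      show n - (j - 1) = (n - j) + 1 by omega, pow_succ, hD]
    ring_nf
  have hP2 : ∀ i, pbProb n (probs ζ j) i = (fac (1 - ζ) * D).coeff i := fun i => by
    rw [pbProb_eq_coeff, prod_probs ζ j n hjn]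
    congr 1
    rw [hD, show j = (j - 1) + 1 by omega, pow_succ,
      show (j - 1) + 1 - 1 = j - 1 by omega]
    ring
  -- difference formula
  have hdiff : ∀ i, pbProb n (probs ζ (j - 1)) i - pbProb n (probs ζ j) i
      = (1 - 2 * ζ) * (a i - aprev a i) := by
    intro i
    rw [hP1, hP2]
    cases i with
    | zero =>
        rw [coeff_fac_mul_zero, coeff_fac_mul_zero, show aprev a 0 = 0 from rfl]
        ring
    | succ k =>
        rw [coeff_fac_mul_succ, coeff_fac_mul_succ, show aprev a (k+1) = a k from rfl]
        ring
  have h2ζ : 0 ≤ 1 - 2 * ζ := by linarith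
  -- rewrite the sum
  have habs : ∀ i, |pbProb n (probs ζ (j - 1)) i - pbProb n (probs ζ j) i|
      = (1 - 2 * ζ) * |a i - aprev a i| := by
    intro i
    rw [hdiff, abs_mul, abs_of_nonneg h2ζ]
  rw [Finset.sum_congr rfl (fun i _ => habs i), ← Finset.mul_sum]
  -- |x| = 2 max x 0 - x
  have habs2 : ∀ x : ℝ, |x| = 2 * max x 0 - x := by
    intro x
    rcases le_or_gt 0 x with hx | hx
    · rw [abs_of_nonneg hx, max_eq_left hx]; ring
    · rw [abs_of_neg hx, max_eq_right hx.le]; ring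
  have hsum : ∑ i ∈ Finset.range (n + 1), |a i - aprev a i|
      = 2 * ∑ i ∈ Finset.range (n + 1), max (a i - aprev a i) 0 := by
    rw [Finset.sum_congr rfl (fun i _ => habs2 _), Finset.sum_sub_distrib, Finset.mul_sum]
    have htel : ∑ i ∈ Finset.range (n + 1), (a i - aprev a i) = a n := by
      rw [Finset.sum_sub_distrib, Finset.sum_range_succ' (aprev a) n,
        show aprev a 0 = 0 from rfl, add_zero,
        Finset.sum_congr rfl (fun i _ => show aprev a (i+1) = a i from rfl),
        Finset.sum_range_succ]
      ring
    rw [htel, hgood.2.1 n (by omega), sub_zero]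
  rw [hsum]
  -- drop the last (zero) term of the positive-part sum
  have hlast : max (a n - aprev a n) 0 = 0 := by
    rw [show n = (n - 1) + 1 by omega, show aprev a ((n-1)+1) = a (n-1) from rfl]
    rw [hgood.2.1 ((n-1)+1) (by omega)]
    have := hgood.nonneg (n - 1)
    rw [max_eq_right (by linarith)]
  have hdrop : ∑ i ∈ Finset.range (n + 1), max (a i - aprev a i) 0
      = ∑ i ∈ Finset.range n, max (a i - aprev a i) 0 := by
    rw [Finset.sum_range_succ, hlast, add_zero]
  rw [hdrop]
  -- main bound
  have hr : Finset.range ((n - 1) + 1) = Finset.range n := by rw [show (n-1)+1 = n by omega]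
  have hbound : ∑ i ∈ Finset.range n, max (a i - aprev a i) 0
      ≤ (Finset.range n).sup' (Finset.nonempty_range_iff.mpr (by omega)) a := by
    calc ∑ i ∈ Finset.range n, max (a i - aprev a i) 0
        = ∑ i ∈ Finset.range ((n - 1) + 1), max (a i - aprev a i) 0 := by rw [hr]
      _ ≤ (Finset.range ((n - 1) + 1)).sup'
            (Finset.nonempty_range_iff.mpr (Nat.succ_ne_zero (n-1))) a := sum_pos_part_le hgood (n - 1)
      _ = (Finset.range n).sup' (Finset.nonempty_range_iff.mpr (by omega)) a :=
          Finset.sup'_congr _ hr (fun _ _ => rfl)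
  have hfinal : (Finset.range n).sup' (Finset.nonempty_range_iff.mpr (by omega)) a
      = (Finset.range n).sup' (Finset.nonempty_range_iff.mpr (by omega))
        (fun i => pbProb (n - 1) (probs ζ (j - 1)) i) :=
    Finset.sup'_congr _ rfl (fun i _ => (hQ i).symm)
  calc (1/2 : ℝ) * ((1 - 2*ζ) * (2 * ∑ i ∈ Finset.range n, max (a i - aprev a i) 0))
      = (1 - 2*ζ) * ∑ i ∈ Finset.range n, max (a i - aprev a i) 0 := by ring
    _ ≤ (1 - 2*ζ) * (Finset.range n).sup' (Finset.nonempty_range_iff.mpr (by omega)) a :=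
        mul_le_mul_of_nonneg_left hbound h2ζ
    _ = _ := by rw [hfinal]
end

section
/- Consider the three-player two-strategy anonymous game where, with x denoting the number of other players playing strategy 1, the row player has u^r_1 = (0,1,1), u^r_2 = (1,1/2,0); the column player has u^c_1 = (1,0,0), u^c_2 = (0,1/4,1/2); and the matrix player has u^m_1 = (0,0,1), u^m_2 = (1,1/2,0) (values listed for x = 0,1,2). Then the probabilities p_r = (√241 − 7)/12, p_c = (√241 − 7)/16, p_m = (23 − √241)/36 of playing strategy 1 make every player exactly indifferent between her two strategies, i.e., they form a fully mixed Nash equilibrium. -/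
/-- Expected utility of a pure strategy with payoff table `u` (indexed by the number
`x ∈ {0,1,2}` of the other two players using strategy 1), when the other two players
independently play strategy 1 with probabilities `a` and `b`. -/
noncomputable def expU (u : Fin 3 → ℝ) (a b : ℝ) : ℝ :=
  u 0 * ((1 - a) * (1 - b)) + u 1 * (a * (1 - b) + b * (1 - a)) + u 2 * (a * b)

theorem stmt10 :
    let pr : ℝ := (Real.sqrt 241 - 7) / 12
    let pc : ℝ := (Real.sqrt 241 - 7) / 16
    let pm : ℝ := (23 - Real.sqrt 241) / 36
    (0 < pr ∧ pr < 1) ∧ (0 < pc ∧ pc < 1) ∧ (0 < pm ∧ pm < 1) ∧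
    expU ![0, 1, 1] pc pm = expU ![1, 1/2, 0] pc pm ∧
    expU ![1, 0, 0] pr pm = expU ![0, 1/4, 1/2] pr pm ∧
    expU ![0, 0, 1] pr pc = expU ![1, 1/2, 0] pr pc := by
  have hs : Real.sqrt 241 ^ 2 = 241 := Real.sq_sqrt (by norm_num)
  have hlb : (15 : ℝ) < Real.sqrt 241 := by
    nlinarith [Real.sqrt_nonneg 241, hs]
  have hub : Real.sqrt 241 < 16 := by
    nlinarith [Real.sqrt_nonneg 241, hs]
  refine ⟨⟨by nlinarith, by nlinarith⟩, ⟨by nlinarith, by nlinarith⟩,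
    ⟨by nlinarith, by nlinarith⟩, ?_, ?_, ?_⟩ <;>
  · simp only [expU, Matrix.cons_val_zero, Matrix.cons_val_one, Matrix.head_cons,
      Matrix.cons_val_two, Matrix.tail_cons]
    nlinarith [hs]
end

section
/- The system of equations (3/2)(y + z) − y·z = 1, (5/4)(x + z) − x·z = 1, (1/2)(x + y) + x·y = 1 has a unique solution with x, y, z ∈ [0,1], namely x = (√241 − 7)/12, y = (√241 − 7)/16, z = (23 − √241)/36, and these values are irrational. -/
/-!
Solving the third equation for `y` and the second for `z` as linear equations in `x` and
substituting into the first leaves `6 x² + 7 x - 8 = 0`, whose only nonnegative root is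
`x = (√241 - 7) / 12`; then `y` and `z` are forced, since `1 + 2 x` and `5 - 4 x` are positive.
-/

lemma sq_sqrt_241 : √241 ^ 2 = (241 : ℝ) := Real.sq_sqrt (by norm_num)

lemma sqrt_241_mem_Ioo : √241 ∈ Set.Ioo (15 : ℝ) 16 := by
  have := Real.sqrt_nonneg 241
  constructor <;> nlinarith [sq_sqrt_241]

lemma irrational_sqrt_241 : Irrational √241 := by norm_num

lemma solution_mem_Icc :
    (√241 - 7) / 12 ∈ Set.Icc (0 : ℝ) 1 ∧ (√241 - 7) / 16 ∈ Set.Icc (0 : ℝ) 1 ∧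
      (23 - √241) / 36 ∈ Set.Icc (0 : ℝ) 1 := by
  obtain ⟨hlo, hhi⟩ := sqrt_241_mem_Ioo
  refine ⟨⟨?_, ?_⟩, ⟨?_, ?_⟩, ⟨?_, ?_⟩⟩ <;> linarith

lemma solution_satisfies_system :
    (3/2) * ((√241 - 7) / 16 + (23 - √241) / 36) - (√241 - 7) / 16 * ((23 - √241) / 36) = 1 ∧
      (5/4) * ((√241 - 7) / 12 + (23 - √241) / 36) - (√241 - 7) / 12 * ((23 - √241) / 36) = 1 ∧
      (1/2) * ((√241 - 7) / 12 + (√241 - 7) / 16) + (√241 - 7) / 12 * ((√241 - 7) / 16) = 1 := by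
  refine ⟨?_, ?_, ?_⟩
  · linear_combination (1/576) * sq_sqrt_241
  · linear_combination (1/432) * sq_sqrt_241
  · linear_combination (1/192) * sq_sqrt_241

lemma quadratic_of_system {x y z : ℝ} (h1 : (3/2) * (y + z) - y * z = 1)
    (h2 : (5/4) * (x + z) - x * z = 1) (h3 : (1/2) * (x + y) + x * y = 1) :
    6 * x ^ 2 + 7 * x - 8 = 0 := by
  have hy : y * (1 + 2 * x) = 2 - x := by linarith
  have hz : z * (5 - 4 * x) = 4 - 5 * x := by linarith
  have h1_cleared : (3/2) * ((5 - 4 * x) * (2 - x) + (1 + 2 * x) * (4 - 5 * x))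
      - (2 - x) * (4 - 5 * x) = (1 + 2 * x) * (5 - 4 * x) := by
    rw [← hy, ← hz]
    linear_combination (1 + 2 * x) * (5 - 4 * x) * h1
  linear_combination -h1_cleared

lemma eq_of_quadratic {x : ℝ} (hx : 0 ≤ x) (hq : 6 * x ^ 2 + 7 * x - 8 = 0) :
    x = (√241 - 7) / 12 := by
  have h0 : (12 * x + 7 - √241) * (12 * x + 7 + √241) = 0 := by
    linear_combination 24 * hq - sq_sqrt_241
  rcases mul_eq_zero.mp h0 with hroot | hroot
  · linarith
  · linarith [Real.sqrt_nonneg 241]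

lemma eq_solution_of_system {x y z : ℝ} (hx : 0 ≤ x) (h1 : (3/2) * (y + z) - y * z = 1)
    (h2 : (5/4) * (x + z) - x * z = 1) (h3 : (1/2) * (x + y) + x * y = 1) :
    x = (√241 - 7) / 12 ∧ y = (√241 - 7) / 16 ∧ z = (23 - √241) / 36 := by
  have hX := eq_of_quadratic hx (quadratic_of_system h1 h2 h3)
  obtain ⟨hlo, hhi⟩ := sqrt_241_mem_Ioo
  subst hX
  refine ⟨rfl, ?_, ?_⟩
  · have hy : (y - (√241 - 7) / 16) * (1 + 2 * ((√241 - 7) / 12)) = 0 := by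
      linear_combination 2 * h3 - (1/96) * sq_sqrt_241
    rcases mul_eq_zero.mp hy with h | h <;> linarith
  · have hz : (z - (23 - √241) / 36) * (5 - 4 * ((√241 - 7) / 12)) = 0 := by
      linear_combination 4 * h2 - (1/108) * sq_sqrt_241
    rcases mul_eq_zero.mp hz with h | h <;> linarith

theorem stmt11 :
    let X : ℝ := (Real.sqrt 241 - 7) / 12
    let Y : ℝ := (Real.sqrt 241 - 7) / 16
    let Z : ℝ := (23 - Real.sqrt 241) / 36
    (X ∈ Set.Icc (0:ℝ) 1 ∧ Y ∈ Set.Icc (0:ℝ) 1 ∧ Z ∈ Set.Icc (0:ℝ) 1 ∧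
      (3/2) * (Y + Z) - Y * Z = 1 ∧
      (5/4) * (X + Z) - X * Z = 1 ∧
      (1/2) * (X + Y) + X * Y = 1) ∧
    (∀ x y z : ℝ, x ∈ Set.Icc (0:ℝ) 1 → y ∈ Set.Icc (0:ℝ) 1 → z ∈ Set.Icc (0:ℝ) 1 →
      (3/2) * (y + z) - y * z = 1 →
      (5/4) * (x + z) - x * z = 1 →
      (1/2) * (x + y) + x * y = 1 →
      x = X ∧ y = Y ∧ z = Z) ∧
    Irrational X ∧ Irrational Y ∧ Irrational Z := by
  intro X Y Z
  have hsub := irrational_sqrt_241.sub_natCast 7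
  obtain ⟨hX, hY, hZ⟩ := solution_mem_Icc
  refine ⟨⟨hX, hY, hZ, solution_satisfies_system⟩,
    fun x y z hx _ _ h1 h2 h3 => eq_solution_of_system hx.1 h1 h2 h3, ?_, ?_, ?_⟩
  · simpa using hsub.div_natCast (m := 12) (by norm_num)
  · simpa using hsub.div_natCast (m := 16) (by norm_num)
  · simpa using (irrational_sqrt_241.natCast_sub 23).div_natCast (m := 36) (by norm_num)
end
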